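/- For nonnegative integers m with 2m ≤ N and real α₁, α₂, β > -1, the Hahn recursion coefficient d_{2m} = A(m,m,α₁,α₂,β,N)·B(m,m,α₁,α₂,β,N)·C(m,m,α₁,α₂,β,N) equals the product a_{6(m-1)+1}·a_{6(m-1)+3}·a_{6(m-1)+5} of the three bidiagonal entries, where only the a₅-type term carries a hypergeometric ratio and the a₃-type term carries its reciprocal, so that the identity reduces to an equality of rational functions: [(N-2n)(α₁+1+n)(α₁+β+2n+1)(α₂+β+2n+1)/((α₁+β+3n+1)(α₁+β+3n+2)(α₂+β+3n+1))] · [(2n+1)(β+2n+1)(α₁+β+2n+2)(α₂+β+2n+2)/((α₁+β+3n+2)(α₁+β+3n+3)(α₂+β+3n+2))] · [(n+1)(N-2n-1)(β+2n+2)(α₁-α₂+n+1)(α₁+β+2+n+N)/((2n+1)(α₁+β+3n+3)(α₁+β+3n+4)(α₂+β+3n+3))] = A(n+1,n+1,α₁,α₂,β,N)·B(n+1,n+1,α₁,α₂,β,N)·C(n+1,n+1,α₁,α₂,β,N), for m = n+1, where A(n₁,n₂,α₁,α₂,β,N) = n₁(n₁+n₂+α₂+β)(n₁+n₂+β)(N+n₁+α₁+β+1)/((n₁+2n₂+α₂+β)(2n₁+n₂+α₁+β)(2n₁+n₂+α₁+β+1)),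 B(n₁,n₂,α₁,α₂,β,N) = (n₁+α₁-α₂)(n₁+n₂+α₁+β)(n₁+n₂+β-1)(N-n₁-n₂+1)/((n₁+2n₂+α₂+β-1)(2n₁+n₂+α₁+β)(2n₁+n₂+α₁+β-1)), C(n₁,n₂,α₁,α₂,β,N) = (n₁+α₁)(n₁+n₂+α₁+β-1)(n₁+n₂+α₂+β-1)(N-n₁-n₂+2)/((n₁+2n₂+α₂+β-2)(2n₁+n₂+α₁+β-2)(2n₁+n₂+α₁+β-1)). -/

import Mathlib

/-- Hahn recursion auxiliary function `A(n₁,n₂,α₁,α₂,β,N)`. -/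
noncomputable def HA (n₁ n₂ α₁ α₂ β N : ℝ) : ℝ :=
  n₁ * (n₁ + n₂ + α₂ + β) * (n₁ + n₂ + β) * (N + n₁ + α₁ + β + 1)
    / ((n₁ + 2 * n₂ + α₂ + β) * (2 * n₁ + n₂ + α₁ + β) * (2 * n₁ + n₂ + α₁ + β + 1))

/-- Hahn recursion auxiliary function `B(n₁,n₂,α₁,α₂,β,N)`. -/
noncomputable def HB (n₁ n₂ α₁ α₂ β N : ℝ) : ℝ :=
  (n₁ + α₁ - α₂) * (n₁ + n₂ + α₁ + β) * (n₁ + n₂ + β - 1) * (N - n₁ - n₂ + 1)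
    / ((n₁ + 2 * n₂ + α₂ + β - 1) * (2 * n₁ + n₂ + α₁ + β) * (2 * n₁ + n₂ + α₁ + β - 1))

/-- Hahn recursion auxiliary function `C(n₁,n₂,α₁,α₂,β,N)`. -/
noncomputable def HC (n₁ n₂ α₁ α₂ β N : ℝ) : ℝ :=
  (n₁ + α₁) * (n₁ + n₂ + α₁ + β - 1) * (n₁ + n₂ + α₂ + β - 1) * (N - n₁ - n₂ + 2)
    / ((n₁ + 2 * n₂ + α₂ + β - 2) * (2 * n₁ + n₂ + α₁ + β - 2) * (2 * n₁ + n₂ + α₁ + β - 1))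

/-!
With `n₁ = n₂ = n + 1` every linear factor of `A · B · C` is one of the factors on the left, and
the only factor on the left not matched this way is `2n + 1`, which occurs once in a numerator and
once in a denominator. So both sides are the same quotient of products, up to cancelling
`2n + 1 ≠ 0`.
-/

theorem HA_succ_succ (x α₁ α₂ β N : ℝ) :
    HA (x + 1) (x + 1) α₁ α₂ β N
      = (x + 1) * (α₂ + β + 2 * x + 2) * (β + 2 * x + 2) * (α₁ + β + 2 + x + N)
        / ((α₂ + β + 3 * x + 3) * (α₁ + β + 3 * x + 3) * (α₁ + β + 3 * x + 4)) := by
  rw [HA]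
  congr 1 <;> ring

theorem HB_succ_succ (x α₁ α₂ β N : ℝ) :
    HB (x + 1) (x + 1) α₁ α₂ β N
      = (α₁ - α₂ + x + 1) * (α₁ + β + 2 * x + 2) * (β + 2 * x + 1) * (N - 2 * x - 1)
        / ((α₂ + β + 3 * x + 2) * (α₁ + β + 3 * x + 3) * (α₁ + β + 3 * x + 2)) := by
  rw [HB]
  congr 1 <;> ring

theorem HC_succ_succ (x α₁ α₂ β N : ℝ) :
    HC (x + 1) (x + 1) α₁ α₂ β N
      = (α₁ + 1 + x) * (α₁ + β + 2 * x + 1) * (α₂ + β + 2 * x + 1) * (N - 2 * x)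
        / ((α₂ + β + 3 * x + 1) * (α₁ + β + 3 * x + 1) * (α₁ + β + 3 * x + 2)) := by
  rw [HC]
  congr 1 <;> ring

theorem div_eq_div_of_eq_mul_of_eq_mul {K : Type*} [Field K] {a b c d k : K} (hk : k ≠ 0)
    (ha : a = k * c) (hb : b = k * d) : a / b = c / d := by
  rw [ha, hb, mul_div_mul_left _ _ hk]

theorem hahn_second_subdiagonal_general (n N : ℕ)
    (α₁ α₂ β : ℝ) :
    ((N : ℝ) - 2 * n) * (α₁ + 1 + n) * (α₁ + β + 2 * n + 1) * (α₂ + β + 2 * n + 1)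
        / ((α₁ + β + 3 * n + 1) * (α₁ + β + 3 * n + 2) * (α₂ + β + 3 * n + 1))
      * ((2 * (n : ℝ) + 1) * (β + 2 * n + 1) * (α₁ + β + 2 * n + 2) * (α₂ + β + 2 * n + 2)
        / ((α₁ + β + 3 * n + 2) * (α₁ + β + 3 * n + 3) * (α₂ + β + 3 * n + 2)))
      * (((n : ℝ) + 1) * ((N : ℝ) - 2 * n - 1) * (β + 2 * n + 2) * (α₁ - α₂ + n + 1)
          * (α₁ + β + 2 + n + N)
        / ((2 * (n : ℝ) + 1) * (α₁ + β + 3 * n + 3) * (α₁ + β + 3 * n + 4)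
          * (α₂ + β + 3 * n + 3)))
    = HA ((n : ℝ) + 1) ((n : ℝ) + 1) α₁ α₂ β N * HB ((n : ℝ) + 1) ((n : ℝ) + 1) α₁ α₂ β N
        * HC ((n : ℝ) + 1) ((n : ℝ) + 1) α₁ α₂ β N := by
  rw [HA_succ_succ, HB_succ_succ, HC_succ_succ]
  simp only [div_mul_div_comm]
  -- the factors now agree syntactically; `ring` would time out expanding the degree-13 products
  exact div_eq_div_of_eq_mul_of_eq_mul (k := 2 * (n : ℝ) + 1) (by positivity) (by ac_rfl)
    (by ac_rfl)

theorem hahn_second_subdiagonal (n N : ℕ) (hN : 2 * n + 1 ≤ N)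
    (α₁ α₂ β : ℝ) (hα₁ : α₁ > -1) (hα₂ : α₂ > -1) (hβ : β > -1) :
    ((N : ℝ) - 2 * n) * (α₁ + 1 + n) * (α₁ + β + 2 * n + 1) * (α₂ + β + 2 * n + 1)
        / ((α₁ + β + 3 * n + 1) * (α₁ + β + 3 * n + 2) * (α₂ + β + 3 * n + 1))
      * ((2 * (n : ℝ) + 1) * (β + 2 * n + 1) * (α₁ + β + 2 * n + 2) * (α₂ + β + 2 * n + 2)
        / ((α₁ + β + 3 * n + 2) * (α₁ + β + 3 * n + 3) * (α₂ + β + 3 * n + 2)))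
      * (((n : ℝ) + 1) * ((N : ℝ) - 2 * n - 1) * (β + 2 * n + 2) * (α₁ - α₂ + n + 1)
          * (α₁ + β + 2 + n + N)
        / ((2 * (n : ℝ) + 1) * (α₁ + β + 3 * n + 3) * (α₁ + β + 3 * n + 4)
          * (α₂ + β + 3 * n + 3)))
    = HA ((n : ℝ) + 1) ((n : ℝ) + 1) α₁ α₂ β N * HB ((n : ℝ) + 1) ((n : ℝ) + 1) α₁ α₂ β N
        * HC ((n : ℝ) + 1) ((n : ℝ) + 1) α₁ α₂ β N :=
  hahn_second_subdiagonal_general n N α₁ α₂ β
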